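/- arXiv:1810.05145 — 2 statements merged into one kernel-verified Lean document; each statement's English description precedes it below -/
import Mathlib

section
/- For the Nesterov–Todd scaling: if W, X, Z are positive definite symmetric matrices with W⁻¹ X W⁻¹ = Z and G Gᵀ = W, then (G⁻¹ ⊗_S (Gᵀ Z))⁻¹ ((G⁻¹ X) ⊗_S Gᵀ) = W ⊗_S W; equivalently, (G⁻¹ ⊗_S (Gᵀ Z)) (W ⊗_S W) = (G⁻¹ X) ⊗_S Gᵀ. -/
/-! Since `(A ⊗_S B)(C ⊗_S C) = (AC) ⊗_S (BC)`, the product `(G⁻¹ ⊗_S GᵀZ)(W ⊗_S W)` is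
`(G⁻¹W) ⊗_S (GᵀZW) = Gᵀ ⊗_S (G⁻¹X)`. The factor `G⁻¹ ⊗_S GᵀZ` is invertible, being
`(1 ⊗_S GᵀZG)(G⁻¹ ⊗ G⁻¹)`: a positive definite matrix times a Kronecker product of units. -/

open Matrix Kronecker

/-- The symmetric Kronecker product `A ⊗_S B = (1/2)(A ⊗ B + B ⊗ A)`. -/
noncomputable def symKron {n : Type*} [Fintype n] (A B : Matrix n n ℝ) :
    Matrix (n × n) (n × n) ℝ :=
  ((1 : ℝ) / 2) • (A ⊗ₖ B + B ⊗ₖ A)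

section SymKron

variable {n : Type*} [Fintype n]

lemma symKron_self (C : Matrix n n ℝ) : symKron C C = C ⊗ₖ C := by
  rw [symKron, ← two_smul ℝ (C ⊗ₖ C), smul_smul]
  norm_num

lemma symKron_comm (A B : Matrix n n ℝ) : symKron A B = symKron B A := by
  rw [symKron, add_comm, symKron]

lemma symKron_mul_symKron_self (A B C : Matrix n n ℝ) :
    symKron A B * symKron C C = symKron (A * C) (B * C) := by
  rw [symKron_self, symKron, symKron, smul_mul_assoc, add_mul, mul_kronecker_mul,
    mul_kronecker_mul]

lemma Matrix.PosDef.symKron {A B : Matrix n n ℝ} (hA : A.PosDef) (hB : B.PosDef) :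
    (symKron A B).PosDef :=
  ((hA.kronecker hB).add (hB.kronecker hA)).smul (by norm_num)

lemma isUnit_symKron_inv_transpose_mul [DecidableEq n] {Z G : Matrix n n ℝ} (hZ : Z.PosDef)
    (hG : IsUnit G) : IsUnit (symKron G⁻¹ (Gᵀ * Z)) := by
  have hGZG : (Gᵀ * Z * G).PosDef := by
    simpa only [conjTranspose_eq_transpose_of_trivial] using
      hZ.conjTranspose_mul_mul_same (mulVec_injective_of_isUnit hG)
  have hfactor : symKron 1 (Gᵀ * Z * G) * symKron G⁻¹ G⁻¹ = symKron G⁻¹ (Gᵀ * Z) := by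
    rw [symKron_mul_symKron_self, one_mul,
      mul_nonsing_inv_cancel_right _ _ ((isUnit_iff_isUnit_det G).mp hG)]
  have hGinv : IsUnit G⁻¹ := isUnit_nonsing_inv_iff.mpr hG
  rw [← hfactor, symKron_self]
  exact (PosDef.one.symKron hGZG).isUnit.mul (hGinv.kronecker hGinv)

end SymKron

theorem nt_scaling_symKron_general {n : Type*} [Fintype n] [DecidableEq n]
    (W X Z G : Matrix n n ℝ)
    (hZ : Z.PosDef)
    (hG : IsUnit G) (hGW : G * Gᵀ = W) (hscal : W⁻¹ * X * W⁻¹ = Z) :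
    (symKron G⁻¹ (Gᵀ * Z))⁻¹ * symKron (G⁻¹ * X) Gᵀ = symKron W W ∧
      symKron G⁻¹ (Gᵀ * Z) * symKron W W = symKron (G⁻¹ * X) Gᵀ := by
  have hGdet : IsUnit G.det := (isUnit_iff_isUnit_det G).mp hG
  have hGTdet : IsUnit Gᵀ.det := isUnit_det_transpose G hGdet
  have hGW_left : G⁻¹ * W = Gᵀ := by
    rw [← hGW, nonsing_inv_mul_cancel_left _ _ hGdet]
  have hGZW : Gᵀ * Z * W = G⁻¹ * X := by
    subst hGW hscal
    simp only [Matrix.mul_inv_rev, mul_assoc, nonsing_inv_mul_cancel_left _ _ hGdet,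
      mul_nonsing_inv_cancel_left _ _ hGTdet, nonsing_inv_mul _ hGTdet, mul_one]
  have hscaling : symKron G⁻¹ (Gᵀ * Z) * symKron W W = symKron (G⁻¹ * X) Gᵀ := by
    rw [symKron_mul_symKron_self, hGW_left, hGZW, symKron_comm]
  refine ⟨?_, hscaling⟩
  have hdet := (isUnit_iff_isUnit_det _).mp (isUnit_symKron_inv_transpose_mul hZ hG)
  rw [← hscaling, nonsing_inv_mul_cancel_left _ _ hdet]

/-- For the Nesterov–Todd scaling `W⁻¹ X W⁻¹ = Z`, `G Gᵀ = W`: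
`(G⁻¹ ⊗_S (Gᵀ Z))⁻¹ ((G⁻¹ X) ⊗_S Gᵀ) = W ⊗_S W`, equivalently
`(G⁻¹ ⊗_S (Gᵀ Z)) (W ⊗_S W) = (G⁻¹ X) ⊗_S Gᵀ`. -/
theorem nt_scaling_symKron {n : Type*} [Fintype n] [DecidableEq n]
    (W X Z G : Matrix n n ℝ)
    (hW : W.PosDef) (hX : X.PosDef) (hZ : Z.PosDef)
    (hG : IsUnit G) (hGW : G * Gᵀ = W) (hscal : W⁻¹ * X * W⁻¹ = Z) :
    (symKron G⁻¹ (Gᵀ * Z))⁻¹ * symKron (G⁻¹ * X) Gᵀ = symKron W W ∧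
      symKron G⁻¹ (Gᵀ * Z) * symKron W W = symKron (G⁻¹ * X) Gᵀ :=
  nt_scaling_symKron_general W X Z G hZ hG hGW hscal
end

section
/- Nesterov–Todd scaling point factorization: let X = L Lᵀ and Z = R Rᵀ be Cholesky factorizations of symmetric positive definite matrices X and Z, and let U D Vᵀ = Rᵀ L be a singular value decomposition (U, V orthogonal, D positive diagonal). Then G := L V D^{−1/2} satisfies G Gᵀ = W, where W := X^{1/2}(X^{1/2} Z X^{1/2})^{−1/2} X^{1/2} is the unique symmetric positive definite matrix with W Z W = X. -/
open Matrix

set_option maxHeartbeats 1000000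

/-- The square root of a positive semidefinite matrix, as `Matrix.PosSemidef.sqrt` was defined
in the older Mathlib (removed since). -/
noncomputable def Matrix.PosSemidef.sqrt {n : Type*} [Fintype n] [DecidableEq n]
    {A : Matrix n n ℝ} (hA : A.PosSemidef) : Matrix n n ℝ :=
  hA.1.eigenvectorUnitary.1 * diagonal ((↑) ∘ (√·) ∘ hA.1.eigenvalues) *
    (star hA.1.eigenvectorUnitary : Matrix n n ℝ)

/-!
With `S = X^{1/2}`, the matrix `P = Vᵀ L⁻¹ S` is orthogonal, because `S Sᵀ = X = L Lᵀ`.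
From the SVD, `V D² Vᵀ = (Rᵀ L)ᵀ (Rᵀ L) = Lᵀ Z L`, hence `S Z S = Pᵀ D² P`, and since
conjugation by an orthogonal matrix commutes with square roots and inverses,
`(S Z S)^{-1/2} = Pᵀ D⁻¹ P`. Finally `S Pᵀ = L V` and `P S = Vᵀ Lᵀ`, so
`W = L V D⁻¹ Vᵀ Lᵀ = G Gᵀ`.
-/

section Sqrt

open scoped MatrixOrder

variable {n : Type*} [Fintype n] [DecidableEq n]

theorem Matrix.PosSemidef.sqrt_eq_cfcSqrt {A : Matrix n n ℝ} (hA : A.PosSemidef) :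
    hA.sqrt = CFC.sqrt A := by
  rw [CFC.sqrt_eq_cfc, cfc_nnreal_eq_real _ A, hA.1.cfc_eq, IsHermitian.cfc,
    Unitary.conjStarAlgAut_apply, Matrix.PosSemidef.sqrt]
  congr 3
  funext i
  simp [max_eq_left (hA.eigenvalues_nonneg i)]

theorem Matrix.PosSemidef.sqrt_mul_sqrt {A : Matrix n n ℝ} (hA : A.PosSemidef) :
    hA.sqrt * hA.sqrt = A := by
  rw [hA.sqrt_eq_cfcSqrt]
  exact CFC.sqrt_mul_sqrt_self A hA.nonneg

theorem Matrix.PosSemidef.transpose_sqrt {A : Matrix n n ℝ} (hA : A.PosSemidef) :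
    hA.sqrtᵀ = hA.sqrt := by
  rw [hA.sqrt_eq_cfcSqrt]
  exact (CFC.sqrt_nonneg A).posSemidef.isHermitian.eq

theorem Matrix.PosSemidef.sqrt_eq_of_mul_self_eq {A B : Matrix n n ℝ} (hA : A.PosSemidef)
    (hB : B.PosSemidef) (h : B * B = A) : hA.sqrt = B := by
  rw [hA.sqrt_eq_cfcSqrt]
  exact CFC.sqrt_unique h hB.nonneg

theorem Matrix.PosSemidef.sqrt_eq_transpose_mul_mul {A B P : Matrix n n ℝ}
    (hA : A.PosSemidef) (hB : B.PosSemidef) (hP : P * Pᵀ = 1) (h : A = Pᵀ * (B * B) * P) :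
    hA.sqrt = Pᵀ * B * P := by
  refine hA.sqrt_eq_of_mul_self_eq (by simpa using hB.conjTranspose_mul_mul_same P) ?_
  calc Pᵀ * B * P * (Pᵀ * B * P) = Pᵀ * B * (P * Pᵀ) * B * P := by noncomm_ring
    _ = A := by rw [hP, h]; noncomm_ring

end Sqrt

section Orthogonal

variable {n R : Type*} [Fintype n] [DecidableEq n] [CommRing R]

theorem Matrix.inv_transpose_mul_mul {B P : Matrix n n R} (hP : P * Pᵀ = 1) :
    (Pᵀ * B * P)⁻¹ = Pᵀ * B⁻¹ * P := by
  rw [Matrix.mul_inv_rev, Matrix.mul_inv_rev, inv_eq_right_inv hP,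
    inv_eq_left_inv hP, Matrix.mul_assoc]

theorem Matrix.inv_mul_mul_transpose_inv_mul {A B : Matrix n n R} (hA : IsUnit A)
    (h : A * Aᵀ = B * Bᵀ) : A⁻¹ * B * (A⁻¹ * B)ᵀ = 1 := by
  have hdet : IsUnit A.det := (isUnit_iff_isUnit_det A).mp hA
  calc A⁻¹ * B * (A⁻¹ * B)ᵀ = A⁻¹ * (B * Bᵀ) * A⁻¹ᵀ := by
        rw [transpose_mul]; noncomm_ring
    _ = (A⁻¹ * A) * (A⁻¹ * A)ᵀ := by rw [← h, transpose_mul]; noncomm_ring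
    _ = 1 := by rw [nonsing_inv_mul A hdet, transpose_one, Matrix.mul_one]

end Orthogonal

theorem Matrix.transpose_mul_self_of_mul_mul_transpose_eq {m n k R : Type*} [Fintype m]
    [Fintype k] [DecidableEq k] [CommRing R] {A : Matrix m n R} {U : Matrix m k R}
    {D : Matrix k k R} {V : Matrix n k R} (hU : Uᵀ * U = 1) (h : U * D * Vᵀ = A) :
    Aᵀ * A = V * (Dᵀ * D) * Vᵀ := by
  calc Aᵀ * A = V * Dᵀ * (Uᵀ * U) * D * Vᵀ := by
        rw [← h]; simp only [transpose_mul, transpose_transpose, Matrix.mul_assoc]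
    _ = V * (Dᵀ * D) * Vᵀ := by rw [hU, Matrix.mul_one, Matrix.mul_assoc V]

theorem Matrix.diagonal_inv_sqrt_mul_transpose {n : Type*} [Fintype n] [DecidableEq n]
    {d : n → ℝ} (hd : ∀ i, 0 < d i) :
    (diagonal fun i => (√(d i))⁻¹) * (diagonal fun i => (√(d i))⁻¹)ᵀ = (diagonal d)⁻¹ := by
  refine (inv_eq_right_inv ?_).symm
  rw [diagonal_transpose, diagonal_mul_diagonal, diagonal_mul_diagonal, ← diagonal_one]
  congr 1
  funext i
  rw [← mul_inv, Real.mul_self_sqrt (hd i).le, mul_inv_cancel₀ (hd i).ne']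

theorem nt_scaling_point_factorization_general {n : Type*} [Fintype n] [DecidableEq n]
    (X Z L R U D V : Matrix n n ℝ)
    (hX : X.PosDef)
    (hXL : X = L * Lᵀ) (hL : IsUnit L)
    (hZR : Z = R * Rᵀ)
    (hU : Uᵀ * U = 1 ∧ U * Uᵀ = 1) (hV : Vᵀ * V = 1 ∧ V * Vᵀ = 1)
    (d : n → ℝ) (hd : ∀ i, 0 < d i) (hD : D = Matrix.diagonal d)
    (hSVD : U * D * Vᵀ = Rᵀ * L)
    (hMid : (hX.posSemidef.sqrt * Z * hX.posSemidef.sqrt).PosSemidef) :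
    (L * V * Matrix.diagonal fun i => (Real.sqrt (d i))⁻¹) *
        (L * V * Matrix.diagonal fun i => (Real.sqrt (d i))⁻¹)ᵀ =
      hX.posSemidef.sqrt * (hMid.sqrt)⁻¹ * hX.posSemidef.sqrt := by
  set S := hX.posSemidef.sqrt
  have hS : Sᵀ = S := hX.posSemidef.transpose_sqrt
  set Q := L⁻¹ * S
  have hQ : Q * Qᵀ = 1 :=
    inv_mul_mul_transpose_inv_mul hL (by rw [← hXL, hS, hX.posSemidef.sqrt_mul_sqrt])
  have hLQ : L * Q = S := mul_nonsing_inv_cancel_left L S ((isUnit_iff_isUnit_det L).mp hL)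
  have hP : Vᵀ * Q * (Vᵀ * Q)ᵀ = 1 := by
    rw [transpose_mul, transpose_transpose, Matrix.mul_assoc, ← Matrix.mul_assoc Q, hQ,
      Matrix.one_mul, hV.1]
  have hgram : Lᵀ * Z * L = V * (D * D) * Vᵀ := by
    have hDT : Dᵀ = D := by rw [hD, diagonal_transpose]
    simpa [hZR, hDT, Matrix.mul_assoc] using transpose_mul_self_of_mul_mul_transpose_eq hU.1 hSVD
  have hMidEq : S * Z * S = (Vᵀ * Q)ᵀ * (D * D) * (Vᵀ * Q) := calc
    S * Z * S = Qᵀ * (Lᵀ * Z * L) * Q := by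
      nth_rw 1 [← hS]; rw [← hLQ, transpose_mul]; noncomm_ring
    _ = (Vᵀ * Q)ᵀ * (D * D) * (Vᵀ * Q) := by
      rw [hgram]; simp only [transpose_mul, transpose_transpose]; noncomm_ring
  have hSP : S * (Vᵀ * Q)ᵀ = L * V := by
    rw [← hLQ, transpose_mul, transpose_transpose, Matrix.mul_assoc, ← Matrix.mul_assoc Q, hQ,
      Matrix.one_mul]
  have hDpsd : D.PosSemidef := hD ▸ posSemidef_diagonal_iff.mpr fun i => (hd i).le
  rw [hMid.sqrt_eq_transpose_mul_mul hDpsd hP hMidEq, inv_transpose_mul_mul hP, hD,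
    ← diagonal_inv_sqrt_mul_transpose hd]
  calc _ = L * V * ((diagonal fun i => (√(d i))⁻¹) * (diagonal fun i => (√(d i))⁻¹)ᵀ) *
        (L * V)ᵀ := by simp only [transpose_mul]; noncomm_ring
    _ = _ := by rw [← hSP]; simp only [transpose_mul, transpose_transpose, hS]; noncomm_ring

/-- Nesterov–Todd scaling point factorization: with Cholesky factorizations `X = L Lᵀ`,
`Z = R Rᵀ` and an SVD `Rᵀ L = U D Vᵀ`, the matrix `G = L V D^{-1/2}` satisfies
`G Gᵀ = W`, where `W = X^{1/2} (X^{1/2} Z X^{1/2})^{-1/2} X^{1/2}` is the scaling point. -/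
theorem nt_scaling_point_factorization {n : Type*} [Fintype n] [DecidableEq n]
    [LinearOrder n]
    (X Z L R U D V : Matrix n n ℝ)
    (hX : X.PosDef) (hZ : Z.PosDef)
    (hXL : X = L * Lᵀ) (hLlow : ∀ i j, i < j → L i j = 0) (hL : IsUnit L)
    (hZR : Z = R * Rᵀ) (hRlow : ∀ i j, i < j → R i j = 0) (hR : IsUnit R)
    (hU : Uᵀ * U = 1 ∧ U * Uᵀ = 1) (hV : Vᵀ * V = 1 ∧ V * Vᵀ = 1)
    (d : n → ℝ) (hd : ∀ i, 0 < d i) (hD : D = Matrix.diagonal d)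
    (hSVD : U * D * Vᵀ = Rᵀ * L)
    (hMid : (hX.posSemidef.sqrt * Z * hX.posSemidef.sqrt).PosSemidef) :
    (L * V * Matrix.diagonal fun i => (Real.sqrt (d i))⁻¹) *
        (L * V * Matrix.diagonal fun i => (Real.sqrt (d i))⁻¹)ᵀ =
      hX.posSemidef.sqrt * (hMid.sqrt)⁻¹ * hX.posSemidef.sqrt :=
  nt_scaling_point_factorization_general X Z L R U D V hX hXL hL hZR hU hV d hd hD hSVD hMid
end
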